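/- The generalized hypergeometric series ₄F₃(3/2, 2, 2, 2; 1, 13/8, 17/8; 1/4) equals (5/1024)·( 88 + 63√2·π + 4·3^{1/4}·arctan(3^{−1/4}) + 126√2·arcoth √2 + 4·3^{1/4}·arcoth(3^{1/4}) ). -/

import Mathlib

/-!
The `n`-th term equals `(45/8) (n+1)² 4^-(n+1) ∫₀¹ (1 - u⁴)^(2n+2) du`: both sides have the same
term ratio, because `K q = ∫₀¹ (1 - u⁴)^q du` satisfies `(4q + 5) K (q+1) = (4q + 4) K q`.
Summing under the integral sign (dominated convergence) turns the series into `∫₀¹` of the rational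
function `Σ (45/8) (n+1)² yⁿ⁺¹ = (45/8) y (1 + y) / (1 - y)³` with `y = (1 - u⁴)²/4`. By partial
fractions this is a derivative of a rational function plus multiples of `1/(1 + u⁴)` and
`1/(3 - u⁴)`, whose integrals over `[0, 1]` produce `π`, `arcoth √2`, `arctan 3^(-1/4)` and
`arcoth 3^(1/4)`.
-/

open Real

noncomputable def poch (a : ℝ) (n : ℕ) : ℝ := Polynomial.eval a (ascPochhammer ℝ n)

noncomputable def arcoth (x : ℝ) : ℝ := (1/2) * Real.log ((x + 1)/(x - 1))

open intervalIntegral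

lemma poch_zero (a : ℝ) : poch a 0 = 1 := by simp [poch]

lemma poch_succ (a : ℝ) (n : ℕ) : poch a (n + 1) = poch a n * (a + n) :=
  ascPochhammer_succ_eval n a

lemma poch_pos {a : ℝ} (ha : 0 < a) (n : ℕ) : 0 < poch a n := ascPochhammer_pos n a ha

noncomputable def quarticBeta (q : ℕ) : ℝ := ∫ u in (0:ℝ)..1, (1 - u ^ 4) ^ q

lemma quarticBeta_zero : quarticBeta 0 = 1 := by simp [quarticBeta]

-- Integrate by parts against `u`: the boundary term `u (1 - u⁴)^(q+1)` vanishes at both ends.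
lemma quarticBeta_succ (q : ℕ) :
    quarticBeta (q + 1) = (4 * q + 4) / (4 * q + 5) * quarticBeta q := by
  have hderiv : ∀ u ∈ Set.uIcc (0:ℝ) 1, HasDerivAt (fun u : ℝ => u * (1 - u ^ 4) ^ (q + 1))
      ((4 * q + 5) * (1 - u ^ 4) ^ (q + 1) - (4 * q + 4) * (1 - u ^ 4) ^ q) u := by
    intro u _
    refine ((hasDerivAt_id u).mul
      (((hasDerivAt_pow 4 u).const_sub 1).pow (q + 1))).congr_deriv ?_
    simp only [id_eq, Pi.pow_apply, Nat.add_sub_cancel]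
    push_cast
    ring
  have hint (p : ℕ) : IntervalIntegrable (fun u : ℝ => (1 - u ^ 4) ^ p) MeasureTheory.volume 0 1 :=
    (by fun_prop : Continuous fun u : ℝ => (1 - u ^ 4) ^ p).intervalIntegrable 0 1
  have hftc := integral_eq_sub_of_hasDerivAt hderiv
    (((hint (q + 1)).const_mul _).sub ((hint q).const_mul _))
  rw [integral_sub ((hint (q + 1)).const_mul _) ((hint q).const_mul _),
    integral_const_mul, integral_const_mul] at hftc
  norm_num at hftc
  unfold quarticBeta
  field_simp
  linarith

noncomputable def hypergeomTerm (n : ℕ) : ℝ :=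
  (poch (3/2) n * poch (2) n * poch (2) n * poch (2) n) /
    (poch (1) n * poch (13/8) n * poch (17/8) n * (Nat.factorial n : ℝ)) * (1/4 : ℝ) ^ n

lemma hypergeomTerm_succ (n : ℕ) : hypergeomTerm (n + 1) = hypergeomTerm n *
    (8 * (2 * n + 3) * (n + 2) ^ 3 / ((n + 1) ^ 2 * (8 * n + 13) * (8 * n + 17))) := by
  have := poch_pos (a := 3/2) (by norm_num) n
  have := poch_pos (a := 2) (by norm_num) n
  have := poch_pos (a := 1) (by norm_num) n
  have := poch_pos (a := 13/8) (by norm_num) n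
  have := poch_pos (a := 17/8) (by norm_num) n
  simp only [hypergeomTerm, poch_succ, Nat.factorial_succ, pow_succ]
  push_cast
  field_simp
  ring

lemma hypergeomTerm_eq_quarticBeta (n : ℕ) :
    hypergeomTerm n = 45 / 8 * ((n:ℝ) + 1) ^ 2 * (1/4) ^ (n + 1) * quarticBeta (2 * n + 2) := by
  induction n with
  | zero =>
    simp only [hypergeomTerm, poch_zero, quarticBeta_succ, quarticBeta_zero]
    norm_num
  | succ n ih =>
    rw [hypergeomTerm_succ, ih, show 2 * (n + 1) + 2 = 2 * n + 2 + 1 + 1 by ring,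
      quarticBeta_succ (2 * n + 2 + 1), quarticBeta_succ (2 * n + 2)]
    push_cast
    field_simp
    ring

-- `(n + 1)² = 2 C(n+2, 2) - C(n+1, 1)` reduces this to the binomial series.
lemma hasSum_succ_sq_mul_geometric {𝕜 : Type*} [NormedField 𝕜] [CompleteSpace 𝕜] {r : 𝕜}
    (hr : ‖r‖ < 1) :
    HasSum (fun n : ℕ => ((n : 𝕜) + 1) ^ 2 * r ^ (n + 1)) (r * (1 + r) / (1 - r) ^ 3) := by
  have hr1 : 1 - r ≠ 0 := sub_ne_zero.mpr (fun h => by simp [← h] at hr)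
  have h2 := hasSum_choose_mul_geometric_of_norm_lt_one 2 hr
  have h1 := hasSum_choose_mul_geometric_of_norm_lt_one 1 hr
  have hval : r * (1 + r) / (1 - r) ^ 3 =
      r * (2 * (1 / (1 - r) ^ (2 + 1)) - 1 / (1 - r) ^ (1 + 1)) := by
    field_simp
    ring
  rw [hval]
  refine (((h2.mul_left 2).sub h1).mul_left r).congr_fun fun n => ?_
  have hchoose : ((n + 2).choose 2 : 𝕜) * 2 = (n + 2) * (n + 1) := by
    have := congrArg (Nat.cast : ℕ → 𝕜) (Nat.add_one_mul_choose_eq (n + 1) 1)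
    push_cast [Nat.choose_one_right] at this
    linear_combination -this
  simp only [Nat.choose_one_right]
  push_cast
  linear_combination (-(r * r ^ n)) * hchoose

noncomputable def hypergeomIntegrand (u : ℝ) : ℝ :=
  45 / 2 * ((1 - u ^ 4) ^ 2 * ((1 - u ^ 4) ^ 2 + 4) / ((1 + u ^ 4) ^ 3 * (3 - u ^ 4) ^ 3))

lemma hasSum_hypergeomIntegrand {u : ℝ} (hu₀ : 0 ≤ u) (hu₁ : u ≤ 1) :
    HasSum (fun n : ℕ => 45 / 8 * ((n:ℝ) + 1) ^ 2 * ((1 - u ^ 4) ^ 2 / 4) ^ (n + 1))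
      (hypergeomIntegrand u) := by
  have h4 : u ^ 4 ≤ 1 := pow_le_one₀ hu₀ hu₁
  have h4' : 0 ≤ u ^ 4 := by positivity
  have hy : ‖(1 - u ^ 4) ^ 2 / 4‖ < 1 := by
    rw [norm_of_nonneg (by positivity)]
    nlinarith
  have hsum : 45 / 8 * ((1 - u ^ 4) ^ 2 / 4 * (1 + (1 - u ^ 4) ^ 2 / 4) /
      (1 - (1 - u ^ 4) ^ 2 / 4) ^ 3) = hypergeomIntegrand u := by
    have : (3:ℝ) - u ^ 4 ≠ 0 := by linarith
    rw [show 1 - (1 - u ^ 4) ^ 2 / 4 = (1 + u ^ 4) * (3 - u ^ 4) / 4 by ring, hypergeomIntegrand]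
    field_simp
    ring
  rw [← hsum]
  exact ((hasSum_succ_sq_mul_geometric hy).mul_left (45 / 8)).congr_fun fun n => by ring

lemma hypergeomTerm_eq_integral (n : ℕ) : hypergeomTerm n =
    ∫ u in (0:ℝ)..1, 45 / 8 * ((n:ℝ) + 1) ^ 2 * ((1 - u ^ 4) ^ 2 / 4) ^ (n + 1) := by
  rw [hypergeomTerm_eq_quarticBeta, quarticBeta, ← integral_const_mul]
  congr 1
  ext u
  rw [div_pow ((1 - u ^ 4) ^ 2), ← pow_mul, one_div_pow]
  ring

lemma hasSum_hypergeomTerm :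
    HasSum hypergeomTerm (∫ u in (0:ℝ)..1, hypergeomIntegrand u) := by
  rw [funext hypergeomTerm_eq_integral]
  refine hasSum_integral_of_dominated_convergence
    (fun n _ => 45 / 8 * (((n:ℝ) + 1) ^ 2 * (1/4) ^ (n + 1)))
    (fun n => (by fun_prop : Continuous _).aestronglyMeasurable)
    (fun n => .of_forall fun u hu => ?_)
    (.of_forall fun _ _ =>
      (hasSum_succ_sq_mul_geometric (r := (1/4:ℝ)) (by norm_num)).summable.mul_left _)
    intervalIntegrable_const (.of_forall fun u hu => ?_)
  · rw [Set.uIoc_of_le zero_le_one] at hu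
    have h4 : u ^ 4 ≤ 1 := pow_le_one₀ hu.1.le hu.2
    have hy : (1 - u ^ 4) ^ 2 / 4 ≤ 1 / 4 := by nlinarith [pow_pos hu.1 4]
    rw [norm_of_nonneg (by positivity), mul_assoc]
    gcongr
  · rw [Set.uIoc_of_le zero_le_one] at hu
    exact hasSum_hypergeomIntegrand hu.1.le hu.2

-- `1 + u⁴ = (u² + √2 u + 1)(u² - √2 u + 1)`.
lemma hasDerivAt_primitive_inv_one_add_pow_four (u : ℝ) :
    HasDerivAt (fun u : ℝ => √2 / 8 * (log (u ^ 2 + √2 * u + 1) - log (u ^ 2 - √2 * u + 1)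
      + 2 * arctan (√2 * u + 1) + 2 * arctan (√2 * u - 1))) (1 / (1 + u ^ 4)) u := by
  have hs : √2 ^ 2 = 2 := sq_sqrt (by norm_num)
  have hp : 0 < u ^ 2 + √2 * u + 1 := by nlinarith [sq_nonneg (2 * u + √2)]
  have hm : 0 < u ^ 2 - √2 * u + 1 := by nlinarith [sq_nonneg (2 * u - √2)]
  have hlin : HasDerivAt (fun u : ℝ => √2 * u) √2 u := by
    simpa using (hasDerivAt_id u).const_mul √2
  have hq : HasDerivAt (fun u : ℝ => u ^ 2 + √2 * u + 1) (2 * u + √2) u := by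
    simpa using ((hasDerivAt_pow 2 u).add hlin).add_const 1
  have hq' : HasDerivAt (fun u : ℝ => u ^ 2 - √2 * u + 1) (2 * u - √2) u := by
    simpa using ((hasDerivAt_pow 2 u).sub hlin).add_const 1
  have H := ((((hq.log hp.ne').sub (hq'.log hm.ne')).add
    ((hlin.add_const 1).arctan.const_mul 2)).add
    ((hlin.sub_const 1).arctan.const_mul 2)).const_mul (√2 / 8)
  refine H.congr_deriv ?_
  have e₁ : 1 + (√2 * u + 1) ^ 2 = 2 * (u ^ 2 + √2 * u + 1) := by
    linear_combination u ^ 2 * hs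
  have e₂ : 1 + (√2 * u - 1) ^ 2 = 2 * (u ^ 2 - √2 * u + 1) := by
    linear_combination u ^ 2 * hs
  have e₃ : 1 + u ^ 4 = (u ^ 2 + √2 * u + 1) * (u ^ 2 - √2 * u + 1) := by
    linear_combination u ^ 2 * hs
  rw [e₁, e₂, e₃]
  generalize hP : u ^ 2 + √2 * u + 1 = P at hp ⊢
  generalize hM : u ^ 2 - √2 * u + 1 = M at hm ⊢
  field_simp
  linear_combination
    (-(2 * √2 * u + 2 * √2 ^ 2)) * hM + (2 * √2 * u - 2 * √2 ^ 2) * hP + 4 * hs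

lemma integral_inv_one_add_pow_four :
    ∫ u in (0:ℝ)..1, 1 / (1 + u ^ 4) = √2 / 8 * (π + 2 * arcoth √2) := by
  have hs : √2 ^ 2 = 2 := sq_sqrt (by norm_num)
  have hs1 : 1 < √2 := by nlinarith [sqrt_nonneg 2]
  have hs2 : √2 < 2 := by nlinarith [sqrt_nonneg 2]
  rw [integral_eq_sub_of_hasDerivAt (fun u _ => hasDerivAt_primitive_inv_one_add_pow_four u)
    ((continuous_const.div (by fun_prop) fun u => by positivity).intervalIntegrable 0 1)]
  have harctan : arctan (√2 + 1) + arctan (√2 - 1) = π / 2 := by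
    have hinv : √2 - 1 = (√2 + 1)⁻¹ :=
      (inv_eq_of_mul_eq_one_right (by linear_combination hs)).symm
    rw [hinv, arctan_inv_of_pos (by positivity)]
    ring
  have hlog : log (√2 + 2) - log (2 - √2) = 2 * arcoth √2 := by
    rw [← log_div (by positivity) (by linarith), arcoth,
      show (√2 + 2) / (2 - √2) = (√2 + 1) / (√2 - 1) by
        rw [div_eq_div_iff (by linarith) (by linarith)]; linear_combination 2 * hs]
    ring
  norm_num [arctan_neg, arctan_one]
  rw [show (1:ℝ) + √2 + 1 = √2 + 2 by ring, show (1:ℝ) - √2 + 1 = 2 - √2 by ring]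
  linear_combination hlog + 2 * harctan

lemma hasDerivAt_primitive_inv_pow_four_sub_pow_four {c u : ℝ} (hc : 0 < c) (hu : |u| < c) :
    HasDerivAt (fun u : ℝ =>
        (log (c + u) - log (c - u)) / (4 * c ^ 3) + arctan (u / c) / (2 * c ^ 3))
      (1 / (c ^ 4 - u ^ 4)) u := by
  obtain ⟨hu₁, hu₂⟩ := abs_lt.mp hu
  have h₁ : c + u ≠ 0 := by linarith
  have h₂ : c - u ≠ 0 := by linarith
  have H := ((((hasDerivAt_id u).const_add c).log h₁).sub
    (((hasDerivAt_id u).const_sub c).log h₂)).div_const (4 * c ^ 3) |>.add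
    (((hasDerivAt_id u).div_const c).arctan.div_const (2 * c ^ 3))
  refine H.congr_deriv ?_
  have h₃ : c ^ 4 - u ^ 4 ≠ 0 := by
    rw [show c ^ 4 - u ^ 4 = (c + u) * (c - u) * (c ^ 2 + u ^ 2) by ring]
    positivity
  simp only [id_eq]
  field_simp
  ring

lemma integral_inv_pow_four_sub_pow_four {c : ℝ} (hc : 1 < c) :
    ∫ u in (0:ℝ)..1, 1 / (c ^ 4 - u ^ 4) = (arcoth c + arctan c⁻¹) / (2 * c ^ 3) := by
  have hderiv : ∀ u ∈ Set.uIcc (0:ℝ) 1, HasDerivAt (fun u : ℝ =>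
      (log (c + u) - log (c - u)) / (4 * c ^ 3) + arctan (u / c) / (2 * c ^ 3))
      (1 / (c ^ 4 - u ^ 4)) u := by
    intro u hu
    rw [Set.uIcc_of_le zero_le_one] at hu
    exact hasDerivAt_primitive_inv_pow_four_sub_pow_four (by linarith)
      (abs_lt.mpr ⟨by linarith [hu.1], by linarith [hu.2]⟩)
  have hcont : ContinuousOn (fun u : ℝ => 1 / (c ^ 4 - u ^ 4)) (Set.uIcc 0 1) := by
    refine continuousOn_const.div (by fun_prop) fun u hu => ?_
    rw [Set.uIcc_of_le zero_le_one] at hu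
    have : u ^ 4 ≤ 1 := pow_le_one₀ hu.1 hu.2
    nlinarith [one_lt_pow₀ hc (by norm_num : 4 ≠ 0)]
  rw [integral_eq_sub_of_hasDerivAt hderiv hcont.intervalIntegrable, arcoth,
    log_div (by linarith) (by linarith)]
  simp only [one_div, add_zero, sub_zero, sub_self, zero_div, arctan_zero]
  ring

-- Partial fractions: removing the `1/(1+u⁴)` and `1/(3-u⁴)` parts leaves a rational derivative.
lemma hasDerivAt_hypergeomIntegrand_rationalPart {u : ℝ} (hu : 3 - u ^ 4 ≠ 0) :
    HasDerivAt (fun u : ℝ => 5 / 32 * (96 * u - 55 * u ^ 5 - 2 * u ^ 9 + 5 * u ^ 13) /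
        ((1 + u ^ 4) ^ 2 * (3 - u ^ 4) ^ 2))
      (hypergeomIntegrand u - 315 / 128 / (1 + u ^ 4) - 15 / 128 / (3 - u ^ 4)) u := by
  have h1 : 1 + u ^ 4 ≠ 0 := by positivity
  have hnum : HasDerivAt (fun u : ℝ => 5 / 32 * (96 * u - 55 * u ^ 5 - 2 * u ^ 9 + 5 * u ^ 13))
      (5 / 32 * (96 - 275 * u ^ 4 - 18 * u ^ 8 + 65 * u ^ 12)) u := by
    refine (((((hasDerivAt_id u).const_mul 96).sub ((hasDerivAt_pow 5 u).const_mul 55)).sub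
      ((hasDerivAt_pow 9 u).const_mul 2)).add
      ((hasDerivAt_pow 13 u).const_mul 5)).const_mul _ |>.congr_deriv ?_
    ring
  have hden := (((hasDerivAt_pow 4 u).const_add 1).fun_pow 2).fun_mul
    (((hasDerivAt_pow 4 u).const_sub 3).fun_pow 2)
  refine (hnum.div hden (mul_ne_zero (pow_ne_zero 2 h1) (pow_ne_zero 2 hu))).congr_deriv ?_
  unfold hypergeomIntegrand
  field_simp
  ring

lemma integral_hypergeomIntegrand {c : ℝ} (hc : 1 < c) (hc4 : c ^ 4 = 3) :
    ∫ u in (0:ℝ)..1, hypergeomIntegrand u =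
      55 / 128 + 315 / 128 * (√2 / 8 * (π + 2 * arcoth √2))
        + 15 / 128 * ((arcoth c + arctan c⁻¹) / (2 * c ^ 3)) := by
  have h3 : ∀ u ∈ Set.uIcc (0:ℝ) 1, 3 - u ^ 4 ≠ 0 := by
    intro u hu
    rw [Set.uIcc_of_le zero_le_one] at hu
    have : u ^ 4 ≤ 1 := pow_le_one₀ hu.1 hu.2
    linarith
  have hg : IntervalIntegrable hypergeomIntegrand MeasureTheory.volume 0 1 := by
    refine ContinuousOn.intervalIntegrable (continuousOn_const.mul (.div ?_ ?_ fun u hu =>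
      mul_ne_zero (by positivity) (pow_ne_zero 3 (h3 u hu)))) <;> fun_prop
  have h1 : IntervalIntegrable (fun u : ℝ => 315 / 128 / (1 + u ^ 4)) MeasureTheory.volume 0 1 :=
    (continuous_const.div (by fun_prop) fun u => by positivity).intervalIntegrable 0 1
  have h2 : IntervalIntegrable (fun u : ℝ => 15 / 128 / (3 - u ^ 4)) MeasureTheory.volume 0 1 :=
    (continuousOn_const.div (by fun_prop) h3).intervalIntegrable
  have hrat := integral_eq_sub_of_hasDerivAt
    (fun u hu => hasDerivAt_hypergeomIntegrand_rationalPart (h3 u hu)) ((hg.sub h1).sub h2)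
  rw [integral_sub (hg.sub h1) h2, integral_sub hg h1] at hrat
  have hI : ∫ u in (0:ℝ)..1, 1 / (3 - u ^ 4) = (arcoth c + arctan c⁻¹) / (2 * c ^ 3) := by
    rw [← hc4]
    exact integral_inv_pow_four_sub_pow_four hc
  simp only [div_eq_mul_one_div (315 / 128 : ℝ), div_eq_mul_one_div (15 / 128 : ℝ),
    integral_const_mul, integral_inv_one_add_pow_four, hI] at hrat
  norm_num at hrat
  linarith

theorem stmt_14 :
    ∑' n : ℕ, (poch (3/2) n * poch (2) n * poch (2) n * poch (2) n) / (poch (1) n * poch (13/8) n * poch (17/8) n * (Nat.factorial n : ℝ)) * (1/4 : ℝ) ^ n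
      = 5/1024 * (88 + 63 * Real.sqrt 2 * Real.pi
          + 4 * (3:ℝ) ^ ((1:ℝ)/4) * Real.arctan ((3:ℝ) ^ (-(1:ℝ)/4))
          + 126 * Real.sqrt 2 * arcoth (Real.sqrt 2)
          + 4 * (3:ℝ) ^ ((1:ℝ)/4) * arcoth ((3:ℝ) ^ ((1:ℝ)/4))) := by
  set c : ℝ := (3:ℝ) ^ ((1:ℝ)/4)
  have hc4 : c ^ 4 = 3 := by
    rw [← rpow_natCast, ← rpow_mul (by norm_num)]
    norm_num
  have hc1 : 1 < c := one_lt_rpow (by norm_num) (by norm_num)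
  have hc3 (x : ℝ) : x / (2 * c ^ 3) = c / 6 * x := by
    field_simp
    linear_combination -2 * x * hc4
  have hcinv : (3:ℝ) ^ (-(1:ℝ)/4) = c⁻¹ := by rw [neg_div, rpow_neg (by norm_num)]
  change ∑' n, hypergeomTerm n = _
  rw [hasSum_hypergeomTerm.tsum_eq, integral_hypergeomIntegrand hc1 hc4, hc3, hcinv]
  ring
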